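/- The code C of Construction 4 is MDS: for every subset S ⊆ {1,…,n} with |S| = k, any two codewords (C_1,…,C_n) and (C'_1,…,C'_n) in C satisfying C_j = C'_j for all j ∈ S are equal. -/

import Mathlib

/-!
Each `A i` with `i < n - 1` is a cyclic weighted shift along coordinate `i`, so the `A i` commute
pairwise, and `A i ^ r` is the scalar `γ ^ (i + 1)`, the product of the weights `λ_{i,u}`, while
`A_n ^ r = γ ^ 0`. Since `γ` has order `|F| - 1 ≥ n`, these scalars are distinct, and then
`A ^ r - B ^ r = (∑ A ^ s B ^ (r - 1 - s)) (A - B)` makes every `A i - A j` injective.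
The difference `W` of two codewords agreeing on `S` is supported on the `r` positions outside `S`
and satisfies `∑ A_i ^ t W_i = 0` for `t < r`. Multiplying these equations by `A_i - A_j` for one
position `j` of the support removes `W_j` at the cost of one equation, so induction on the support
(a Vandermonde argument with commuting matrices in place of scalars) gives `W = 0`.
-/

open Matrix Finset

section Elimination

variable {R : Type*} [Ring R] {X : Type*} [Fintype X] [DecidableEq X]

theorem Matrix.injective_mulVec_sub_of_pow_eq_smul_one {K : Type*} [Field K]
    {A B : Matrix X X K} {m : ℕ} {c d : K} (hAB : Commute A B)
    (hA : A ^ m = c • 1) (hB : B ^ m = d • 1) (hcd : c ≠ d) :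
    Function.Injective (A - B).mulVec := by
  refine (injective_iff_map_eq_zero (A - B).mulVecLin).2 fun v (hv : (A - B) *ᵥ v = 0) => ?_
  have : (c - d) • v = 0 :=
    calc (c - d) • v = (A ^ m - B ^ m) *ᵥ v := by
          rw [hA, hB, sub_mulVec, smul_mulVec, smul_mulVec, one_mulVec, sub_smul]
      _ = 0 := by rw [← hAB.geom_sum₂_mul, ← mulVec_mulVec, hv, mulVec_zero]
  exact (smul_eq_zero.1 this).resolve_left (sub_ne_zero.2 hcd)

theorem Matrix.sum_pow_mulVec_sub_mulVec {ι : Type*} [Fintype ι] {A : ι → Matrix X X R}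
    {B : Matrix X X R} (hAB : ∀ i, Commute (A i) B) (W : ι → X → R) (t : ℕ) :
    ∑ i, A i ^ t *ᵥ ((A i - B) *ᵥ W i) =
      ∑ i, A i ^ (t + 1) *ᵥ W i - B *ᵥ ∑ i, A i ^ t *ᵥ W i := by
  rw [mulVec_sum, ← sum_sub_distrib]
  refine sum_congr rfl fun i _ => ?_
  rw [mulVec_mulVec, mulVec_mulVec, mul_sub, ← pow_succ, ((hAB i).pow_left t).eq, sub_mulVec]

theorem Matrix.eq_zero_of_sum_pow_mulVec_eq_zero {ι : Type*} [Fintype ι] [DecidableEq ι]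
    {A : ι → Matrix X X R} (hcomm : ∀ i j, Commute (A i) (A j))
    (hinj : Pairwise fun i j => Function.Injective (A i - A j).mulVec)
    (T : Finset ι) {W : ι → X → R} (hsupp : ∀ i ∉ T, W i = 0)
    (hW : ∀ t < #T, ∑ i, A i ^ t *ᵥ W i = 0) : W = 0 := by
  induction T using Finset.induction_on generalizing W with
  | empty => exact funext fun i => hsupp i (notMem_empty i)
  | insert j T hj ih =>
    rw [card_insert_of_notMem hj] at hW
    have hW' : (fun i => (A i - A j) *ᵥ W i) = 0 := by
      refine ih (fun i hi => ?_) fun t ht => ?_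
      · rcases eq_or_ne i j with rfl | hij
        · rw [sub_self, zero_mulVec]
        · rw [hsupp i (by simp [hi, hij]), mulVec_zero]
      · rw [sum_pow_mulVec_sub_mulVec (fun i => hcomm i j), hW (t + 1) (by omega),
          hW t (by omega), mulVec_zero, sub_zero]
    have hne : ∀ i ≠ j, W i = 0 := fun i hij =>
      hinj hij (by rw [mulVec_zero]; exact congr_fun hW' i)
    have hWj : W j = 0 := by
      simpa [sum_eq_single j fun i _ => hne i] using hW 0 (by omega)
    funext i
    rcases eq_or_ne i j with rfl | hij
    exacts [hWj, hne i hij]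

theorem Matrix.eq_of_forall_sum_pow_mulVec_eq_zero {ι : Type*} [Fintype ι] [DecidableEq ι]
    {A : ι → Matrix X X R} (hcomm : ∀ i j, Commute (A i) (A j))
    (hinj : Pairwise fun i j => Function.Injective (A i - A j).mulVec) {r : ℕ}
    {C C' : ι → X → R} (hC : ∀ t < r, ∑ i, A i ^ t *ᵥ C i = 0)
    (hC' : ∀ t < r, ∑ i, A i ^ t *ᵥ C' i = 0) {S : Finset ι} (hS : #Sᶜ ≤ r)
    (heq : ∀ j ∈ S, C j = C' j) : C = C' := by
  refine sub_eq_zero.1 (eq_zero_of_sum_pow_mulVec_eq_zero hcomm hinj Sᶜ ?_ fun t ht => ?_)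
  · exact fun i hi => sub_eq_zero.2 (heq i (by simpa using hi))
  · simp only [Pi.sub_apply, mulVec_sub, sum_sub_distrib]
    rw [hC t (by omega), hC' t (by omega), sub_zero]

end Elimination

section WeightedShift

open Fin.NatCast

variable {R : Type*} [CommRing R] {m r : ℕ} [NeZero r]

def weightedShift (i : Fin m) (w : Fin r → R) : Matrix (Fin m → Fin r) (Fin m → Fin r) R :=
  of fun a b => if b = Function.update a i (a i + 1) then w (a i) else 0

theorem weightedShift_mulVec_apply (i : Fin m) (w : Fin r → R) (v : (Fin m → Fin r) → R)
    (a : Fin m → Fin r) :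
    (weightedShift i w *ᵥ v) a = w (a i) * v (Function.update a i (a i + 1)) := by
  simp [weightedShift, mulVec, dotProduct]

theorem weightedShift_pow_mulVec_apply (i : Fin m) (w : Fin r → R) (t : ℕ)
    (v : (Fin m → Fin r) → R) (a : Fin m → Fin r) :
    (weightedShift i w ^ t *ᵥ v) a =
      (∏ s ∈ range t, w (a i + s)) * v (Function.update a i (a i + t)) := by
  induction t generalizing a with
  | zero => simp
  | succ t ih =>
    rw [pow_succ', ← mulVec_mulVec, weightedShift_mulVec_apply, ih, prod_range_succ',
      Function.update_self, Function.update_idem]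
    simp only [Nat.cast_succ, Nat.cast_zero, add_zero, add_assoc, add_comm (1 : Fin r)]
    ring

theorem weightedShift_pow_card (i : Fin m) (w : Fin r → R) :
    weightedShift i w ^ r = (∏ u, w u) • 1 := by
  refine ext_iff_mulVec.2 fun v => funext fun a => ?_
  rw [weightedShift_pow_mulVec_apply, Fin.natCast_self, add_zero, Function.update_eq_self,
    smul_mulVec, one_mulVec, Pi.smul_apply, smul_eq_mul, ← Fin.prod_univ_eq_prod_range]
  simp only [Fin.cast_val_eq_self]
  exact congrArg (· * v a) (Equiv.prod_comp (Equiv.addLeft (a i)) w)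

theorem commute_weightedShift {i j : Fin m} (hij : i ≠ j) (w w' : Fin r → R) :
    Commute (weightedShift i w) (weightedShift j w') := by
  refine ext_iff_mulVec.2 fun v => funext fun a => ?_
  simp only [← mulVec_mulVec, weightedShift_mulVec_apply, Function.update_of_ne hij,
    Function.update_of_ne hij.symm, Function.update_comm hij]
  ring

end WeightedShift

section Generator

variable {F : Type*} [Field F] [Fintype F] {γ : F}

theorem ne_zero_of_forall_eq_pow (hF : 2 < Fintype.card F)
    (hγ : ∀ x : F, x ≠ 0 → ∃ m : ℕ, x = γ ^ m) : γ ≠ 0 := by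
  rintro rfl
  have hone : ∀ x : F, x ≠ 0 → x = 1 := fun x hx => by
    obtain ⟨_ | m, rfl⟩ := hγ x hx
    exacts [pow_zero _, absurd (zero_pow m.succ_ne_zero) hx]
  obtain ⟨a, b, c, hab, hac, hbc⟩ := Fintype.two_lt_card_iff.1 hF
  rcases eq_or_ne a 0 with rfl | ha
  · exact hbc ((hone b hab.symm).trans (hone c hac.symm).symm)
  rcases eq_or_ne b 0 with rfl | hb
  · exact hac ((hone a ha).trans (hone c hbc.symm).symm)
  · exact hab ((hone a ha).trans (hone b hb).symm)

theorem orderOf_eq_card_sub_one_of_forall_eq_pow (hγ0 : γ ≠ 0)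
    (hγ : ∀ x : F, x ≠ 0 → ∃ m : ℕ, x = γ ^ m) : orderOf γ = Fintype.card F - 1 := by
  rw [← Units.val_mk0 hγ0, orderOf_units, ← Nat.card_eq_fintype_card, ← Nat.card_units]
  refine orderOf_eq_card_of_forall_mem_zpowers fun x => ?_
  obtain ⟨m, hm⟩ := hγ x x.ne_zero
  exact ⟨m, Units.ext (by simp [hm])⟩

theorem injOn_pow_Iio_card_sub_one_of_forall_eq_pow (hF : 2 < Fintype.card F)
    (hγ : ∀ x : F, x ≠ 0 → ∃ m : ℕ, x = γ ^ m) :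
    (Set.Iio (Fintype.card F - 1)).InjOn (γ ^ ·) := by
  rw [← orderOf_eq_card_sub_one_of_forall_eq_pow (ne_zero_of_forall_eq_pow hF hγ) hγ]
  exact pow_injOn_Iio_orderOf

end Generator

open Matrix in
/-- Construction 4 is MDS: any `k = n - r` nodes determine the whole codeword. -/
theorem construction4_is_MDS
    (F : Type*) [Field F] [Fintype F]
    (n r : ℕ) (hr : 1 ≤ r) (hrn : r < n)
    (hF : n + 1 ≤ Fintype.card F)
    (γ : F) (hγprim : ∀ x : F, x ≠ 0 → ∃ m : ℕ, x = γ ^ m)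
    (lam : Fin (n - 1) → Fin r → F)
    (hlam : ∀ (i : Fin (n - 1)) (u : Fin r),
      lam i u = if (u : ℕ) = 0 then γ ^ ((i : ℕ) + 1) else 1)
    (A : Fin n → Matrix (Fin (n - 1) → Fin r) (Fin (n - 1) → Fin r) F)
    (hA : ∀ (i : Fin n) (hi : (i : ℕ) < n - 1),
      A i = Matrix.of fun a b : Fin (n - 1) → Fin r =>
        if b = Function.update a ⟨i, hi⟩
            ⟨((a ⟨i, hi⟩ : ℕ) + 1) % r, Nat.mod_lt _ hr⟩
        then lam ⟨i, hi⟩ (a ⟨i, hi⟩) else 0)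
    (hAn : A ⟨n - 1, by omega⟩ = 1)
    (C C' : Fin n → (Fin (n - 1) → Fin r) → F)
    (hC : ∀ t < r, ∑ i, (A i ^ t) *ᵥ C i = 0)
    (hC' : ∀ t < r, ∑ i, (A i ^ t) *ᵥ C' i = 0)
    (S : Finset (Fin n)) (hS : S.card = n - r)
    (heq : ∀ j ∈ S, C j = C' j) :
    C = C' := by
  have : NeZero r := ⟨by omega⟩
  have : NeZero n := ⟨by omega⟩
  have hshift (i : Fin n) (hi : (i : ℕ) < n - 1) :
      A i = weightedShift ⟨i, hi⟩ (lam ⟨i, hi⟩) := by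
    rw [hA i hi, weightedShift]
    congr! with a b
    rw [Fin.val_add, Fin.val_one', Nat.add_mod_mod]
  have hlast (i : Fin n) (hi : ¬ (i : ℕ) < n - 1) : A i = 1 := by
    rw [← hAn]
    exact congrArg A (Fin.ext (by simp; omega))
  have hcomm (i j : Fin n) : Commute (A i) (A j) := by
    rcases eq_or_ne i j with rfl | hij
    · rfl
    by_cases hi : (i : ℕ) < n - 1 <;> by_cases hj : (j : ℕ) < n - 1
    · rw [hshift i hi, hshift j hj]
      exact commute_weightedShift (by simpa [Fin.ext_iff] using hij) _ _
    all_goals first | simp [hlast i ‹_›] | simp [hlast j ‹_›]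
  -- `(i + 1 : Fin n)` is `i + 1` for `i < n - 1` and wraps to `0` for the identity block `A_n`.
  have hpow (i : Fin n) : A i ^ r = γ ^ ((i + 1 : Fin n) : ℕ) • 1 := by
    by_cases hi : (i : ℕ) < n - 1
    · rw [hshift i hi, weightedShift_pow_card, Fin.val_add_one_of_lt' (by omega)]
      simp [hlam]
    · have : ((i + 1 : Fin n) : ℕ) = 0 := by
        rw [Fin.val_add, Fin.val_one', Nat.add_mod_mod, show (i : ℕ) + 1 = n by omega,
          Nat.mod_self]
      rw [hlast i hi, one_pow, this, pow_zero, one_smul]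
  have hinj : Pairwise fun i j => Function.Injective (A i - A j).mulVec := fun i j hij => by
    refine injective_mulVec_sub_of_pow_eq_smul_one (hcomm i j) (hpow i) (hpow j) fun h => hij ?_
    have hγ := injOn_pow_Iio_card_sub_one_of_forall_eq_pow (by omega) hγprim
    have hlt (k : Fin n) : (k : ℕ) ∈ Set.Iio (Fintype.card F - 1) := by
      simp only [Set.mem_Iio]; omega
    exact add_right_cancel (Fin.val_injective (hγ (hlt _) (hlt _) h))
  refine eq_of_forall_sum_pow_mulVec_eq_zero hcomm hinj hC hC' ?_ heq
  rw [card_compl, hS, Fintype.card_fin]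
  omega
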